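/- arXiv:2205.01433 — 2 statements merged into one kernel-verified Lean document; each statement's English description precedes it below -/
import Mathlib

section
/- If u: ℝ → ℝ is a smooth solution of the Painlevé II equation u'' = r·u + 2u³, then ψ := −u² satisfies the ODE ψ''' + 12ψψ' − 4rψ' − 2ψ = 0. -/
/-- If `u` is a smooth solution of the Painlevé II equation `u'' = r·u + 2u³`, then
`ψ = -u²` satisfies `ψ''' + 12ψψ' - 4rψ' - 2ψ = 0`. -/
theorem painleveII_to_KP_ode (u : ℝ → ℝ) (hu : ContDiff ℝ (⊤ : ℕ∞) u)
    (hP2 : ∀ r : ℝ, iteratedDeriv 2 u r = r * u r + 2 * (u r) ^ 3) :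
    ∀ r : ℝ,
      iteratedDeriv 3 (fun s => -(u s) ^ 2) r
        + 12 * (-(u r) ^ 2) * deriv (fun s => -(u s) ^ 2) r
        - 4 * r * deriv (fun s => -(u s) ^ 2) r
        - 2 * (-(u r) ^ 2) = 0 := by
  have hd : Differentiable ℝ u := hu.differentiable (by simp)
  have hu' : ContDiff ℝ (↑(⊤ : ℕ∞)) u := hu.of_le (by simp)
  have hd' : Differentiable ℝ (deriv u) :=
    ((contDiff_infty_iff_deriv.mp hu').2).differentiable (by simp)
  have h2 : deriv (deriv u) = fun r => r * u r + 2 * u r ^ 3 := by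
    funext r
    have := hP2 r
    simpa [iteratedDeriv_succ, iteratedDeriv_zero] using this
  have hU : ∀ r : ℝ, HasDerivAt u (deriv u r) r := fun r => (hd r).hasDerivAt
  have hU' : ∀ r : ℝ, HasDerivAt (deriv u) (r * u r + 2 * u r ^ 3) r := by
    intro r
    have := (hd' r).hasDerivAt
    rwa [h2] at this
  -- first derivative of ψ
  have hψ1 : ∀ r : ℝ, HasDerivAt (fun s => -(u s) ^ 2) (-(2 * u r * deriv u r)) r := by
    intro r
    have := ((hU r).fun_pow 2).fun_neg
    refine this.congr_deriv ?_
    push_cast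
    ring
  have hψ1' : deriv (fun s => -(u s) ^ 2) = fun r => -(2 * u r * deriv u r) :=
    funext fun r => (hψ1 r).deriv
  -- second derivative
  have hψ2 : ∀ r : ℝ, HasDerivAt (fun s => -(2 * u s * deriv u s))
      (-(2 * deriv u r * deriv u r + 2 * u r * (r * u r + 2 * u r ^ 3))) r := by
    intro r
    exact (((hU r).const_mul 2).mul (hU' r)).neg
  have hψ2' : deriv (deriv (fun s => -(u s) ^ 2))
      = fun r => -(2 * deriv u r * deriv u r + 2 * u r * (r * u r + 2 * u r ^ 3)) := by
    rw [hψ1']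
    exact funext fun r => (hψ2 r).deriv
  -- third derivative
  have hψ3 : ∀ r : ℝ, HasDerivAt
      (fun s => -(2 * deriv u s * deriv u s + 2 * u s * (s * u s + 2 * u s ^ 3)))
      (-(2 * (r * u r + 2 * u r ^ 3) * deriv u r + 2 * deriv u r * (r * u r + 2 * u r ^ 3)
        + (2 * deriv u r * (r * u r + 2 * u r ^ 3)
          + 2 * u r * (1 * u r + r * deriv u r + 2 * ((3 : ℕ) * u r ^ 2 * deriv u r))))) r := by
    intro r
    exact ((((hU' r).const_mul 2).mul (hU' r)).add
      (((hU r).const_mul 2).mul (((hasDerivAt_id r).mul (hU r)).add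
        (((hU r).pow 3).const_mul 2)))).neg
  intro r
  have h3 : iteratedDeriv 3 (fun s => -(u s) ^ 2) r
      = -(2 * (r * u r + 2 * u r ^ 3) * deriv u r + 2 * deriv u r * (r * u r + 2 * u r ^ 3)
        + (2 * deriv u r * (r * u r + 2 * u r ^ 3)
          + 2 * u r * (1 * u r + r * deriv u r + 2 * ((3 : ℕ) * u r ^ 2 * deriv u r)))) := by
    have : iteratedDeriv 3 (fun s => -(u s) ^ 2) r
        = deriv (deriv (deriv (fun s => -(u s) ^ 2))) r := by
      simp [iteratedDeriv_succ, iteratedDeriv_zero]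
    rw [this, hψ2']
    have := hψ3 r
    have hfun : (fun s => -(2 * u s * (s * u s + 2 * u s ^ 3) + 2 * deriv u s * deriv u s))
        = fun s => -(2 * deriv u s * deriv u s + 2 * u s * (s * u s + 2 * u s ^ 3)) := by
      funext s; ring
    exact (hψ3 r).deriv
  rw [h3, hψ1']
  simp only []
  push_cast
  ring
end

section
/- Miura transform to Painlevé II: if u: ℝ → ℝ is a smooth solution of u'' = r·u + 2u³, then ψ := (1/2)(u' − u²) satisfies ψ''' + 12ψψ' − rψ' − 2ψ = 0. -/
/-- Miura transform to Painlevé II: if `u` is a smooth solution of `u'' = r·u + 2u³`, then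
`ψ = (1/2)(u' - u²)` satisfies `ψ''' + 12ψψ' - rψ' - 2ψ = 0`. -/
theorem miura_painleveII (u : ℝ → ℝ) (hu : ContDiff ℝ (⊤ : ℕ∞) u)
    (hP2 : ∀ r : ℝ, iteratedDeriv 2 u r = r * u r + 2 * (u r) ^ 3) :
    ∀ r : ℝ,
      iteratedDeriv 3 (fun s => (1/2) * (deriv u s - (u s) ^ 2)) r
        + 12 * ((1/2) * (deriv u r - (u r) ^ 2))
            * deriv (fun s => (1/2) * (deriv u s - (u s) ^ 2)) r
        - r * deriv (fun s => (1/2) * (deriv u s - (u s) ^ 2)) r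
        - 2 * ((1/2) * (deriv u r - (u r) ^ 2)) = 0 := by
  intro r
  have hu2 : ContDiff ℝ (⊤ : ℕ∞) u := hu.of_le (by simp)
  have hdu : Differentiable ℝ u := hu.differentiable (by simp)
  have hu' : ContDiff ℝ (⊤ : ℕ∞) (deriv u) := (contDiff_infty_iff_deriv.mp hu2).2
  have hdu' : Differentiable ℝ (deriv u) := hu'.differentiable (by simp)
  have hdd : ∀ s : ℝ, deriv (deriv u) s = s * u s + 2 * (u s) ^ 3 := by
    intro s
    have := hP2 s
    rwa [iteratedDeriv_succ, iteratedDeriv_one] at this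
  -- first derivative of ψ
  have Hg : ∀ s : ℝ, HasDerivAt (fun s => (1/2) * (deriv u s - (u s) ^ 2))
      ((1/2) * s * u s + (u s) ^ 3 - u s * deriv u s) s := by
    intro s
    have h1 : HasDerivAt u (deriv u s) s := (hdu s).hasDerivAt
    have h2 : HasDerivAt (deriv u) (deriv (deriv u) s) s := (hdu' s).hasDerivAt
    have := (h2.sub (h1.pow 2)).const_mul (1/2 : ℝ)
    refine this.congr_deriv ?_
    rw [hdd s]; push_cast; ring
  have hg : deriv (fun s => (1/2) * (deriv u s - (u s) ^ 2))
      = fun s => (1/2) * s * u s + (u s) ^ 3 - u s * deriv u s :=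
    funext fun s => (Hg s).deriv
  -- second derivative of ψ
  have Hh : ∀ s : ℝ, HasDerivAt (fun s => (1/2) * s * u s + (u s) ^ 3 - u s * deriv u s)
      ((1/2) * u s + (1/2) * s * deriv u s + 3 * (u s) ^ 2 * deriv u s
        - (deriv u s) ^ 2 - s * (u s) ^ 2 - 2 * (u s) ^ 4) s := by
    intro s
    have h1 : HasDerivAt u (deriv u s) s := (hdu s).hasDerivAt
    have h2 : HasDerivAt (deriv u) (deriv (deriv u) s) s := (hdu' s).hasDerivAt
    have A : HasDerivAt (fun x : ℝ => (1/2) * x * u x)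
        ((1/2 * 1) * u s + (1/2 * s) * deriv u s) s :=
      ((hasDerivAt_id s).const_mul (1/2 : ℝ)).mul h1
    have := (A.add (h1.pow 3)).sub (h1.mul h2)
    refine this.congr_deriv ?_
    rw [hdd s]; push_cast; ring
  have hh : deriv (fun s => (1/2) * s * u s + (u s) ^ 3 - u s * deriv u s)
      = fun s => (1/2) * u s + (1/2) * s * deriv u s + 3 * (u s) ^ 2 * deriv u s
        - (deriv u s) ^ 2 - s * (u s) ^ 2 - 2 * (u s) ^ 4 :=
    funext fun s => (Hh s).deriv
  -- third derivative of ψ at r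
  have Hk : HasDerivAt (fun s => (1/2) * u s + (1/2) * s * deriv u s + 3 * (u s) ^ 2 * deriv u s
        - (deriv u s) ^ 2 - s * (u s) ^ 2 - 2 * (u s) ^ 4)
      ((1/2) * deriv u r + ((1/2 * 1) * deriv u r + (1/2 * r) * (r * u r + 2 * (u r) ^ 3))
        + (6 * u r * deriv u r * deriv u r + 3 * (u r) ^ 2 * (r * u r + 2 * (u r) ^ 3))
        - 2 * deriv u r * (r * u r + 2 * (u r) ^ 3)
        - ((u r) ^ 2 + r * (2 * u r * deriv u r))
        - 8 * (u r) ^ 3 * deriv u r) r := by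
    have h1 : HasDerivAt u (deriv u r) r := (hdu r).hasDerivAt
    have h2 : HasDerivAt (deriv u) (deriv (deriv u) r) r := (hdu' r).hasDerivAt
    have A : HasDerivAt (fun x : ℝ => (1/2) * x * deriv u x)
        ((1/2 * 1) * deriv u r + (1/2 * r) * deriv (deriv u) r) r :=
      ((hasDerivAt_id r).const_mul (1/2 : ℝ)).mul h2
    have B : HasDerivAt (fun x : ℝ => 3 * (u x) ^ 2 * deriv u x)
        ((3 * ((2:ℕ) * u r ^ 1 * deriv u r)) * deriv u r + 3 * (u r) ^ 2 * deriv (deriv u) r) r :=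
      ((h1.pow 2).const_mul (3:ℝ)).mul h2
    have C : HasDerivAt (fun x : ℝ => x * (u x) ^ 2)
        (1 * (u r) ^ 2 + r * ((2:ℕ) * u r ^ 1 * deriv u r)) r :=
      (hasDerivAt_id r).mul (h1.pow 2)
    have := ((((((h1.const_mul (1/2 : ℝ)).add A).add B).sub (h2.pow 2)).sub C).sub
      ((h1.pow 4).const_mul (2:ℝ)))
    refine this.congr_deriv ?_
    rw [hdd r]; push_cast; ring
  simp only [iteratedDeriv_succ, iteratedDeriv_zero, hg, hh]
  rw [Hk.deriv]
  ring
end
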